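/- Fix δ ∈ ℝ. Let 0<β<mn (with a fixed splitting β = Σ β_i, 0<β_i<n), p⃗ a vector of exponents, and δ̃ < β − mn. Let w : ℝ^n → [0,∞) be measurable and locally integrable, and let v_1,…,v_m : ℝ^n → (0,∞] be measurable. Then the pair (w,v⃗) satisfies the H_m(p⃗,β,δ̃) condition if and only if v_i = ∞ almost everywhere for some 1 ≤ i ≤ m, or w = 0 almost everywhere. -/

import Mathlib

open MeasureTheory Metric Set
open scoped ENNReal NNReal BigOperators
open scoped Classical

noncomputable section

/-- Euclidean space `ℝⁿ`. -/
abbrev Rn (n : ℕ) : Type := EuclideanSpace ℝ (Fin n)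

/-- The `q`-"norm" of a nonnegative function with respect to the measure `μ`,
for `q ∈ [1,∞]`; `q = ∞` gives the essential supremum. -/
noncomputable def LpNormE {α : Type*} [MeasurableSpace α] (μ : Measure α)
    (g : α → ℝ≥0∞) (q : ℝ≥0∞) : ℝ≥0∞ :=
  if q = ∞ then essSup g μ else (∫⁻ x, g x ^ q.toReal ∂μ) ^ (1 / q.toReal)

/-- Conjugate exponent in `[1,∞]`. -/
noncomputable def conjE (q : ℝ≥0∞) : ℝ≥0∞ :=
  if q = 1 then ∞ else if q = ∞ then 1 else ENNReal.ofReal (q.toReal / (q.toReal - 1))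

/-- Real-valued conjugate exponent of `q ∈ (1,∞]`. -/
noncomputable def conjR (q : ℝ≥0∞) : ℝ :=
  if q = ∞ then 1 else q.toReal / (q.toReal - 1)

/-- A weight: measurable, a.e. positive and finite, and locally integrable. -/
def IsWeight (n : ℕ) (u : Rn n → ℝ≥0∞) : Prop :=
  Measurable u ∧ (∀ᵐ x ∂(volume : Measure (Rn n)), 0 < u x ∧ u x < ∞) ∧
    ∀ (c : Rn n) (R : ℝ), 0 < R → ∫⁻ x in ball c R, u x < ∞

/-- The `i`-th factor in the `H_m(p,β,δ̃)` condition over the ball `B(c,R)`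
(`δ` is the fixed ambient parameter, `β i` the splitting of `β`). For `p i = 1`
the conjugate exponent is `∞` and the factor is an essential supremum. -/
noncomputable def HmFactor (n m : ℕ) (δ : ℝ) (β : Fin m → ℝ) (p : Fin m → ℝ≥0∞)
    (v : Fin m → Rn n → ℝ≥0∞) (c : Rn n) (R : ℝ) (i : Fin m) : ℝ≥0∞ :=
  LpNormE volume
    (fun y => (v i y)⁻¹ *
      (volume (ball c R) ^ (n : ℝ)⁻¹ + edist c y) ^ (-((n : ℝ) - β i + δ / (m : ℝ))))
    (conjE (p i))

/-- The left-hand side of the `H_m(p,β,δ̃)` condition over the ball `B(c,R)`. -/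
noncomputable def HmLHS (n m : ℕ) (δ δt : ℝ) (β : Fin m → ℝ) (p : Fin m → ℝ≥0∞)
    (w : Rn n → ℝ≥0∞) (v : Fin m → Rn n → ℝ≥0∞) (c : Rn n) (R : ℝ) : ℝ≥0∞ :=
  essSup w (volume.restrict (ball c R)) / volume (ball c R) ^ ((δt - δ) / (n : ℝ)) *
    ∏ i, HmFactor n m δ β p v c R i

/-- The class `H_m(p,β,δ̃)`, with fixed ambient parameter `δ` and splitting `β i`. -/
def MemHm (n m : ℕ) (δ δt : ℝ) (β : Fin m → ℝ) (p : Fin m → ℝ≥0∞)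
    (w : Rn n → ℝ≥0∞) (v : Fin m → Rn n → ℝ≥0∞) : Prop :=
  ∃ C : ℝ≥0∞, C ≠ ∞ ∧ ∀ (c : Rn n) (R : ℝ), 0 < R → HmLHS n m δ δt β p w v c R ≤ C

/-- The reverse Hölder class `RH_s`. -/
def MemRH (n : ℕ) (s : ℝ) (u : Rn n → ℝ≥0∞) : Prop :=
  ∃ C : ℝ≥0∞, C ≠ ∞ ∧ ∀ (c : Rn n) (R : ℝ), 0 < R →
    ((volume (ball c R))⁻¹ * ∫⁻ x in ball c R, u x ^ s) ^ s⁻¹ ≤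
      C * ((volume (ball c R))⁻¹ * ∫⁻ x in ball c R, u x)

/-- The reverse Hölder class `RH_∞`. -/
def MemRHinf (n : ℕ) (u : Rn n → ℝ≥0∞) : Prop :=
  ∃ C : ℝ≥0∞, C ≠ ∞ ∧ ∀ (c : Rn n) (R : ℝ), 0 < R →
    essSup u (volume.restrict (ball c R)) ≤
      C * ((volume (ball c R))⁻¹ * ∫⁻ x in ball c R, u x)

/-- The Muckenhoupt class `A_1`. -/
def MemA1 (n : ℕ) (u : Rn n → ℝ≥0∞) : Prop :=
  ∃ C : ℝ≥0∞, C ≠ ∞ ∧ ∀ (c : Rn n) (R : ℝ), 0 < R →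
    (volume (ball c R))⁻¹ * ∫⁻ x in ball c R, u x ≤
      C * essInf u (volume.restrict (ball c R))

/-- A doubling function: the integral over `2B` is controlled by the one over `B`. -/
def Doubling (n : ℕ) (u : Rn n → ℝ≥0∞) : Prop :=
  ∃ C : ℝ≥0∞, C ≠ ∞ ∧ ∀ (c : Rn n) (R : ℝ), 0 < R →
    ∫⁻ x in ball c (2 * R), u x ≤ C * ∫⁻ x in ball c R, u x

/-- The `i`-th factor in the global condition over the ball `B(c,R)`. -/
noncomputable def GlobalFactor (n m : ℕ) (δ : ℝ) (β : Fin m → ℝ) (p : Fin m → ℝ≥0∞)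
    (v : Fin m → Rn n → ℝ≥0∞) (c : Rn n) (R : ℝ) (i : Fin m) : ℝ≥0∞ :=
  LpNormE (volume.restrict (ball c R)ᶜ)
    (fun y => (v i y)⁻¹ * edist c y ^ (-((n : ℝ) - β i + δ / (m : ℝ)))) (conjE (p i))

/-- The global condition associated with the class `H_m(p,β,δ̃)`. -/
def GlobalCond (n m : ℕ) (δ δt : ℝ) (β : Fin m → ℝ) (p : Fin m → ℝ≥0∞)
    (w : Rn n → ℝ≥0∞) (v : Fin m → Rn n → ℝ≥0∞) : Prop :=
  ∃ C : ℝ≥0∞, C ≠ ∞ ∧ ∀ (c : Rn n) (R : ℝ), 0 < R →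
    essSup w (volume.restrict (ball c R)) / volume (ball c R) ^ ((δt - δ) / (n : ℝ)) *
      ∏ i, GlobalFactor n m δ β p v c R i ≤ C

/-- The local condition associated with the class `H_m(p,β,δ̃)`; here `β` is the
total (scalar) parameter. -/
def LocalCond (n m : ℕ) (δt β : ℝ) (p : Fin m → ℝ≥0∞)
    (w : Rn n → ℝ≥0∞) (v : Fin m → Rn n → ℝ≥0∞) : Prop :=
  ∃ C : ℝ≥0∞, C ≠ ∞ ∧ ∀ (c : Rn n) (R : ℝ), 0 < R →
    essSup w (volume.restrict (ball c R)) /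
        volume (ball c R) ^ (δt / (n : ℝ) + (∑ i, (p i)⁻¹).toReal - β / (n : ℝ)) *
      ∏ i, (if p i = 1 then essSup (fun x => (v i x)⁻¹) (volume.restrict (ball c R))
        else ((volume (ball c R))⁻¹ * ∫⁻ x in ball c R, (v i x)⁻¹ ^ conjR (p i)) ^
          (conjR (p i))⁻¹) ≤ C

/-- The multilinear class `A_{p⃗,∞}`. -/
def MemApInf (n m : ℕ) (p : Fin m → ℝ≥0∞) (v : Fin m → Rn n → ℝ≥0∞) : Prop :=
  ∃ C : ℝ≥0∞, C ≠ ∞ ∧ ∀ (c : Rn n) (R : ℝ), 0 < R →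
    essSup (fun x => ∏ i, v i x) (volume.restrict (ball c R)) *
      ∏ i, (if p i = 1 then essSup (fun x => (v i x)⁻¹) (volume.restrict (ball c R))
        else ((volume (ball c R))⁻¹ * ∫⁻ x in ball c R, (v i x)⁻¹ ^ conjR (p i)) ^
          (conjR (p i))⁻¹) ≤ C

/-- The multilinear class `A_{p⃗,q}` for `0 < q < ∞`. -/
def MemApq (n m : ℕ) (p : Fin m → ℝ≥0∞) (q : ℝ) (w : Fin m → Rn n → ℝ≥0∞) : Prop :=
  ∃ C : ℝ≥0∞, C ≠ ∞ ∧ ∀ (c : Rn n) (R : ℝ), 0 < R →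
    ((volume (ball c R))⁻¹ * ∫⁻ x in ball c R, ∏ i, w i x ^ q) ^ (1 / q) *
      ∏ i, (if p i = 1 then essSup (fun x => (w i x)⁻¹) (volume.restrict (ball c R))
        else ((volume (ball c R))⁻¹ * ∫⁻ x in ball c R, (w i x)⁻¹ ^ conjR (p i)) ^
          (conjR (p i))⁻¹) ≤ C

/-- The multilinear Muckenhoupt class `A_{r⃗}`. -/
def MemAvec (n m : ℕ) (r : Fin m → ℝ≥0∞) (u : Fin m → Rn n → ℝ≥0∞) : Prop :=
  ∃ C : ℝ≥0∞, C ≠ ∞ ∧ ∀ (c : Rn n) (R : ℝ), 0 < R →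
    ((volume (ball c R))⁻¹ *
        ∫⁻ x in ball c R, ∏ i, u i x ^ ((∑ j, (r j)⁻¹).toReal⁻¹ * ((r i)⁻¹).toReal)) ^
        (∑ j, (r j)⁻¹).toReal *
      ∏ i, (if r i = 1 then essSup (fun x => (u i x)⁻¹) (volume.restrict (ball c R))
        else ((volume (ball c R))⁻¹ * ∫⁻ x in ball c R, u i x ^ (1 - conjR (r i))) ^
          (conjR (r i))⁻¹) ≤ C

/-- Product Lebesgue measure on `(ℝⁿ)^m`. -/
noncomputable def pim (n m : ℕ) : Measure (Fin m → Rn n) :=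
  Measure.pi fun _ => (volume : Measure (Rn n))

/-- Size condition for a multilinear fractional kernel of order `α`. -/
def SizeCond (n m : ℕ) (α : ℝ) (K : Rn n → (Fin m → Rn n) → ℝ) : Prop :=
  ∃ C : ℝ, 0 < C ∧ ∀ (x : Rn n) (y : Fin m → Rn n), (∑ i, dist x (y i)) ≠ 0 →
    |K x y| ≤ C * (∑ i, dist x (y i)) ^ (α - (m : ℝ) * (n : ℝ))

/-- Smoothness condition with exponent `γ` for a multilinear fractional kernel. -/
def SmoothCond (n m : ℕ) (α γ : ℝ) (K : Rn n → (Fin m → Rn n) → ℝ) : Prop :=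
  ∃ C : ℝ, 0 < C ∧ ∀ (x x' : Rn n) (y : Fin m → Rn n),
    2 * dist x x' < ∑ i, dist x (y i) →
    |K x y - K x' y| ≤ C * dist x x' ^ γ * (∑ i, dist x (y i)) ^ (α - (m : ℝ) * (n : ℝ) - γ)

/-- The Lipschitz space `Λ(δ)`. -/
def MemLip (n : ℕ) (δ : ℝ) (b : Rn n → ℝ) : Prop :=
  ∃ C : ℝ, 0 ≤ C ∧ ∀ x y : Rn n, |b x - b y| ≤ C * dist x y ^ δ

/-- The multilinear integral operator with kernel `K`. -/
noncomputable def TOp (n m : ℕ) (K : Rn n → (Fin m → Rn n) → ℝ)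
    (f : Fin m → Rn n → ℝ) (x : Rn n) : ℝ :=
  ∫ y, K x y * ∏ i, f i (y i) ∂pim n m

/-- The sum-type multilinear commutator `T_{α,b}`. -/
noncomputable def TSumComm (n m : ℕ) (K : Rn n → (Fin m → Rn n) → ℝ)
    (b : Fin m → Rn n → ℝ) (f : Fin m → Rn n → ℝ) (x : Rn n) : ℝ :=
  ∑ j, ∫ y, (b j x - b j (y j)) * K x y * ∏ i, f i (y i) ∂pim n m

/-- The product-type multilinear commutator `𝒯_{α,b}` (integral representation). -/
noncomputable def TProdComm (n m : ℕ) (K : Rn n → (Fin m → Rn n) → ℝ)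
    (b : Fin m → Rn n → ℝ) (f : Fin m → Rn n → ℝ) (x : Rn n) : ℝ :=
  ∫ y, K x y * ∏ i, (b i x - b i (y i)) * f i (y i) ∂pim n m

/-- `‖f · v‖_q` for a real function `f` and a weight `v`. -/
noncomputable def wLpNorm (n : ℕ) (f : Rn n → ℝ) (v : Rn n → ℝ≥0∞) (q : ℝ≥0∞) : ℝ≥0∞ :=
  LpNormE volume (fun x => ENNReal.ofReal |f x| * v x) q

/-- The (nonnegative) multilinear fractional integral `I_{a,m}`. -/
noncomputable def IfracE (n m : ℕ) (a : ℝ) (g : Fin m → Rn n → ℝ≥0∞) (x : Rn n) : ℝ≥0∞ :=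
  ∫⁻ y, (∑ i, edist x (y i)) ^ (a - (m : ℝ) * (n : ℝ)) * ∏ i, g i (y i) ∂pim n m

/-- Commuting with `b` in the `j`-th entry. -/
noncomputable def commAt (n m : ℕ) (T : (Fin m → Rn n → ℝ) → Rn n → ℝ)
    (g : Rn n → ℝ) (j : Fin m) (f : Fin m → Rn n → ℝ) (x : Rn n) : ℝ :=
  g x * T f x - T (Function.update f j fun z => g z * f j z) x

/-- The iterated commutator `[b_k, … [b_2, [b_1, T]_1]_2 … ]_k`. -/
noncomputable def iterComm (n m : ℕ) (T : (Fin m → Rn n → ℝ) → Rn n → ℝ)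
    (b : Fin m → Rn n → ℝ) : ℕ → (Fin m → Rn n → ℝ) → Rn n → ℝ
  | 0 => T
  | k + 1 => fun f x =>
      if h : k < m then commAt n m (iterComm n m T b k) (b ⟨k, h⟩) ⟨k, h⟩ f x
      else iterComm n m T b k f x

end
section Helpers
lemma essSup_lower {α : Type*} [MeasurableSpace α] {μ : Measure α} {g : α → ℝ≥0∞}
    {S : Set α} (hμ : μ S ≠ 0) {b : ℝ≥0∞} (hb : ∀ x ∈ S, b ≤ g x) : b ≤ essSup g μ := by
  by_contra h
  push_neg at h
  have h1 : ∀ᵐ y ∂μ, g y ≤ essSup g μ := ENNReal.ae_le_essSup (μ := μ) g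
  rw [MeasureTheory.ae_iff] at h1
  exact hμ (measure_mono_null (fun x hx => by
    simp only [mem_setOf_eq, not_le]
    exact lt_of_lt_of_le h (hb x hx)) h1)

lemma rpow_anti {x y : ℝ≥0∞} {e : ℝ} (hx : x ≠ 0) (hxy : x ≤ y) (he : e ≤ 0) :
    y ^ e ≤ x ^ e := by
  have h1 : x ^ (-e) ≤ y ^ (-e) := ENNReal.rpow_le_rpow hxy (by linarith)
  have h2 : y ^ e = (y ^ (-e))⁻¹ := by rw [← ENNReal.rpow_neg, neg_neg]
  have h3 : x ^ e = (x ^ (-e))⁻¹ := by rw [← ENNReal.rpow_neg, neg_neg]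
  rw [h2, h3]
  exact ENNReal.inv_le_inv.mpr h1

lemma rpow_sum' {ι : Type*} (s : Finset ι) {x : ℝ≥0∞} (hx : x ≠ 0) (hx' : x ≠ ∞) (f : ι → ℝ) :
    x ^ (∑ i ∈ s, f i) = ∏ i ∈ s, x ^ f i := by
  classical
  induction s using Finset.induction with
  | empty => simp
  | insert _ _ h ih => rw [Finset.sum_insert h, Finset.prod_insert h, ENNReal.rpow_add _ _ hx hx', ih]

lemma rpow_ne_top' {x : ℝ≥0∞} {y : ℝ} (h0 : x ≠ 0) (ht : x ≠ ∞) : x ^ y ≠ ∞ := by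
  simp [ENNReal.rpow_eq_top_iff, h0, ht]

lemma rpow_ne_zero' {x : ℝ≥0∞} {y : ℝ} (h0 : x ≠ 0) (ht : x ≠ ∞) : x ^ y ≠ 0 :=
  (ENNReal.rpow_pos (pos_iff_ne_zero.mpr h0) ht).ne'

lemma one_le_conjE {q : ℝ≥0∞} (hq : 1 ≤ q) : 1 ≤ conjE q := by
  unfold conjE
  split_ifs with h1 h2
  · exact le_top
  · exact le_refl _
  · have hlt : 1 < q := lt_of_le_of_ne hq (Ne.symm h1)
    have ht : 1 < q.toReal := by
      rw [← ENNReal.toReal_one]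
      exact (ENNReal.toReal_lt_toReal (by simp) h2).mpr hlt
    refine ENNReal.one_le_ofReal.mpr ?_
    rw [le_div_iff₀ (by linarith)]
    linarith

lemma conjE_ne_top_toReal_pos {q : ℝ≥0∞} (hq : 1 ≤ q) (h : conjE q ≠ ∞) :
    0 < (conjE q).toReal :=
  ENNReal.toReal_pos (by intro h0; simpa [h0] using one_le_conjE hq) h

lemma conjE_alt {q : ℝ≥0∞} (hq : 1 ≤ q) : conjE q = ∞ ∨ 0 < (conjE q).toReal := by
  by_cases h : conjE q = ∞
  · exact Or.inl h
  · exact Or.inr (conjE_ne_top_toReal_pos hq h)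

lemma LpNormE_lower {α : Type*} [MeasurableSpace α] {μ : Measure α} {g : α → ℝ≥0∞}
    {q : ℝ≥0∞} (hq : q = ∞ ∨ 0 < q.toReal) {S : Set α} (hS : MeasurableSet S)
    (hμ0 : μ S ≠ 0) {b : ℝ≥0∞} (hb : ∀ x ∈ S, b ≤ g x) :
    b * μ S ^ (q.toReal)⁻¹ ≤ LpNormE μ g q := by
  unfold LpNormE
  rcases hq with hq | hq
  · simp only [hq, if_true, ENNReal.toReal_top, inv_zero, ENNReal.rpow_zero, mul_one]
    exact essSup_lower hμ0 hb
  · have hqt : q ≠ ∞ := by rintro rfl; simp at hq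
    rw [if_neg hqt]
    set r := q.toReal
    have h1 : b ^ r * μ S ≤ ∫⁻ x, g x ^ r ∂μ := by
      rw [← setLIntegral_const S (b ^ r), ← lintegral_indicator hS]
      refine lintegral_mono fun x => ?_
      by_cases hx : x ∈ S
      · rw [Set.indicator_of_mem hx]
        exact ENNReal.rpow_le_rpow (hb x hx) hq.le
      · rw [Set.indicator_of_notMem hx]; exact zero_le
    calc b * μ S ^ r⁻¹ = (b ^ r * μ S) ^ (1 / r) := by
          rw [ENNReal.mul_rpow_of_nonneg _ _ (by positivity), one_div, ← ENNReal.rpow_mul,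
            mul_inv_cancel₀ hq.ne', ENNReal.rpow_one]
      _ ≤ _ := ENNReal.rpow_le_rpow h1 (by positivity)

lemma LpNormE_zero_of_ae {α : Type*} [MeasurableSpace α] {μ : Measure α} {g : α → ℝ≥0∞}
    {q : ℝ≥0∞} (hq : q = ∞ ∨ 0 < q.toReal) (hg : g =ᵐ[μ] 0) : LpNormE μ g q = 0 := by
  unfold LpNormE
  rcases hq with hq | hq
  · rw [if_pos hq]
    exact ENNReal.essSup_eq_zero_iff.mpr hg
  · have hqt : q ≠ ∞ := by rintro rfl; simp at hq
    rw [if_neg hqt]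
    have hae : (fun x => g x ^ q.toReal) =ᵐ[μ] (fun _ => 0) :=
      hg.mono fun x hx => by
        simp only [Pi.zero_apply] at hx
        simp [hx, ENNReal.zero_rpow_of_pos hq]
    rw [lintegral_congr_ae hae, lintegral_zero]
    exact ENNReal.zero_rpow_of_pos (by positivity)
end Helpers

lemma Hm_backward_aux (n m : ℕ) (δ δt : ℝ) (β : Fin m → ℝ) (p : Fin m → ℝ≥0∞)
    (hp : ∀ i, 1 ≤ p i) (w : Rn n → ℝ≥0∞) (v : Fin m → Rn n → ℝ≥0∞)
    (h : (∃ i, ∀ᵐ x ∂(volume : Measure (Rn n)), v i x = ∞) ∨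
        (∀ᵐ x ∂(volume : Measure (Rn n)), w x = 0)) :
    MemHm n m δ δt β p w v := by
  refine ⟨1, ENNReal.one_ne_top, fun c R hR => ?_⟩
  unfold HmLHS
  rcases h with ⟨i, hi⟩ | hw
  · have hfac : HmFactor n m δ β p v c R i = 0 := by
      unfold HmFactor
      refine LpNormE_zero_of_ae (conjE_alt (hp i)) ?_
      filter_upwards [hi] with x hx
      simp [hx]
    rw [Finset.prod_eq_zero (Finset.mem_univ i) hfac, mul_zero]
    exact zero_le
  · have h0 : essSup w (volume.restrict (ball c R)) = 0 :=
      ENNReal.essSup_eq_zero_iff.mpr (ae_restrict_of_ae hw)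
    rw [h0, ENNReal.zero_div, zero_mul]
    exact zero_le

set_option maxHeartbeats 1000000 in
lemma Hm_forward_aux (n m : ℕ) (hn : 1 ≤ n) (hm : 1 ≤ m) (δ δt : ℝ)
    (β : Fin m → ℝ) (p : Fin m → ℝ≥0∞) (hp : ∀ i, 1 ≤ p i)
    (hδt : δt < (∑ i, β i) - (m : ℝ) * n)
    (w : Rn n → ℝ≥0∞) (hwmeas : Measurable w)
    (v : Fin m → Rn n → ℝ≥0∞) (hvmeas : ∀ i, Measurable (v i))
    (hv : ∀ i, ¬ ∀ᵐ x ∂(volume : Measure (Rn n)), v i x = ∞)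
    (hw : ¬ ∀ᵐ x ∂(volume : Measure (Rn n)), w x = 0) :
    ¬ MemHm n m δ δt β p w v := by
  rintro ⟨C, hC, hCle⟩
  haveI : Nonempty (Fin n) := ⟨⟨0, hn⟩⟩
  haveI : Nontrivial (Rn n) := inferInstance
  -- extract a set where w is bounded below
  have hw' : volume {x : Rn n | ¬ w x = 0} ≠ 0 := fun h0 => hw (MeasureTheory.ae_iff.mpr h0)
  have hwE : ∃ k j : ℕ, volume ({x : Rn n | ((k : ℝ≥0∞) + 1)⁻¹ ≤ w x}
      ∩ ball 0 ((j : ℝ) + 1)) ≠ 0 := by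
    by_contra hcon
    push_neg at hcon
    apply hw'
    refine measure_mono_null (fun x hx => ?_)
      (measure_iUnion_null fun k => measure_iUnion_null fun j => hcon k j)
    simp only [mem_setOf_eq] at hx
    obtain ⟨k, hk⟩ := ENNReal.exists_inv_nat_lt hx
    obtain ⟨j, hj⟩ := exists_nat_gt (dist x (0 : Rn n))
    refine mem_iUnion.mpr ⟨k, mem_iUnion.mpr ⟨j, ?_, ?_⟩⟩
    · exact le_trans (ENNReal.inv_le_inv.mpr (by
        exact_mod_cast le_add_of_nonneg_right zero_le_one)) hk.le
    · exact mem_ball.mpr (by linarith)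
  obtain ⟨kw, jw, hwE⟩ := hwE
  set ε : ℝ≥0∞ := ((kw : ℝ≥0∞) + 1)⁻¹ with hε
  set E : Set (Rn n) := {x : Rn n | ε ≤ w x} ∩ ball 0 ((jw : ℝ) + 1) with hE
  have hEmeas : MeasurableSet E :=
    (measurableSet_le measurable_const hwmeas).inter measurableSet_ball
  -- extract sets where each v i is bounded above
  have hvE : ∀ i, ∃ N r : ℕ, volume ({x : Rn n | v i x ≤ (N : ℝ≥0∞) + 1}
      ∩ ball 0 ((r : ℝ) + 1)) ≠ 0 := by
    intro i
    have hv' : volume {x : Rn n | ¬ v i x = ∞} ≠ 0 := fun h0 => hv i (MeasureTheory.ae_iff.mpr h0)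
    by_contra hcon
    push_neg at hcon
    apply hv'
    refine measure_mono_null (fun x hx => ?_)
      (measure_iUnion_null fun N => measure_iUnion_null fun r => hcon N r)
    simp only [mem_setOf_eq] at hx
    obtain ⟨N, hN⟩ := ENNReal.exists_nat_gt hx
    obtain ⟨r, hr⟩ := exists_nat_gt (dist x (0 : Rn n))
    refine mem_iUnion.mpr ⟨N, mem_iUnion.mpr ⟨r, ?_, ?_⟩⟩
    · exact le_trans hN.le (by exact_mod_cast le_add_of_nonneg_right zero_le_one)
    · exact mem_ball.mpr (by linarith)
  choose N r hS using hvE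
  set S : Fin m → Set (Rn n) :=
    fun i => {x : Rn n | v i x ≤ (N i : ℝ≥0∞) + 1} ∩ ball 0 ((r i : ℝ) + 1) with hSdef
  have hSmeas : ∀ i, MeasurableSet (S i) :=
    fun i => (measurableSet_le (hvmeas i) measurable_const).inter measurableSet_ball
  have hSt : ∀ i, volume (S i) ≠ ∞ :=
    fun i => ((measure_mono inter_subset_right).trans_lt measure_ball_lt_top).ne
  -- constants
  have hn0 : (n : ℝ) ≠ 0 := Nat.cast_ne_zero.mpr (by omega)
  have hm0 : (m : ℝ) ≠ 0 := Nat.cast_ne_zero.mpr (by omega)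
  set V : ℝ≥0∞ := volume (ball (0 : Rn n) 1) with hVdef
  have hV0 : V ≠ 0 := (measure_ball_pos _ _ one_pos).ne'
  have hVt : V ≠ ∞ := measure_ball_lt_top.ne
  set a : ℝ≥0∞ := V ^ (n : ℝ)⁻¹ with hadef
  have ha0 : a ≠ 0 := rpow_ne_zero' hV0 hVt
  have hat : a ≠ ∞ := rpow_ne_top' hV0 hVt
  have ha1t : a + 1 ≠ ∞ := ENNReal.add_ne_top.mpr ⟨hat, ENNReal.one_ne_top⟩
  set e : Fin m → ℝ := fun i => -((n : ℝ) - β i + δ / (m : ℝ)) with hedef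
  set s : ℝ := (δt - δ) / (n : ℝ) with hsdef
  have hsum : ∑ i, e i = (∑ i, β i) - (m : ℝ) * n - δ := by
    have h1 : ∀ i : Fin m, e i = β i - ((n : ℝ) + δ / (m : ℝ)) := fun i => by
      simp only [hedef]; ring
    rw [Finset.sum_congr rfl fun i _ => h1 i, Finset.sum_sub_distrib, Finset.sum_const,
      Finset.card_univ, Fintype.card_fin, nsmul_eq_mul]
    field_simp
    ring
  set τ : ℝ := (∑ i, β i) - (m : ℝ) * n - δt with hτdef
  have hτ : 0 < τ := by simp only [hτdef]; linarith
  set D : Fin m → ℝ≥0∞ := fun i => ((N i : ℝ≥0∞) + 1)⁻¹ * (a ^ e i ⊓ (a + 1) ^ e i) *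
    volume (S i) ^ ((conjE (p i)).toReal)⁻¹ with hDdef
  have hD0 : ∀ i, D i ≠ 0 := by
    intro i
    refine mul_ne_zero (mul_ne_zero (ENNReal.inv_ne_zero.mpr (by simp)) ?_)
      (rpow_ne_zero' (hS i) (hSt i))
    exact (lt_min (ENNReal.rpow_pos (pos_iff_ne_zero.mpr ha0) hat)
      (ENNReal.rpow_pos (by simp [pos_iff_ne_zero, ha0]) ha1t)).ne'
  have hDt : ∀ i, D i ≠ ∞ := by
    intro i
    refine ENNReal.mul_ne_top (ENNReal.mul_ne_top (ENNReal.inv_ne_top.mpr (by simp)) ?_)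
      (rpow_ne_top' (hS i) (hSt i))
    exact ne_top_of_le_ne_top (rpow_ne_top' ha0 hat) inf_le_left
  set K : ℝ≥0∞ := ε * (V ^ s)⁻¹ * ∏ i, D i with hKdef
  have hK0 : K ≠ 0 := by
    refine mul_ne_zero (mul_ne_zero (ENNReal.inv_ne_zero.mpr (by simp)) ?_) ?_
    · exact ENNReal.inv_ne_zero.mpr (rpow_ne_top' hV0 hVt)
    · exact Finset.prod_ne_zero_iff.mpr fun i _ => hD0 i
  have hKt : K ≠ ∞ := by
    refine ENNReal.mul_ne_top (ENNReal.mul_ne_top (ENNReal.inv_ne_top.mpr (by simp)) ?_) ?_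
    · exact ENNReal.inv_ne_top.mpr (rpow_ne_zero' hV0 hVt)
    · exact (ENNReal.prod_lt_top fun i _ => (hDt i).lt_top).ne
  set R₀ : ℝ := ((jw : ℝ) + 1) + (∑ i, ((r i : ℝ) + 1)) + 1 with hR₀def
  have hR₀pos : 0 < R₀ := by
    have h1 : (0 : ℝ) ≤ ∑ i, ((r i : ℝ) + 1) := Finset.sum_nonneg fun i _ => by positivity
    have h2 : (0 : ℝ) ≤ (jw : ℝ) := Nat.cast_nonneg _
    rw [hR₀def]; linarith
  -- the key lower bound
  have key : ∀ R : ℝ, R₀ ≤ R → K * (ENNReal.ofReal R) ^ τ ≤ HmLHS n m δ δt β p w v 0 R := by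
    intro R hRR
    have hsumr : (0 : ℝ) ≤ ∑ i, ((r i : ℝ) + 1) := Finset.sum_nonneg fun i _ => by positivity
    have hjw : (0 : ℝ) ≤ (jw : ℝ) := Nat.cast_nonneg _
    have hR1 : 1 ≤ R := by rw [hR₀def] at hRR; linarith
    have hR0 : 0 < R := by linarith
    set T : ℝ≥0∞ := ENNReal.ofReal R with hTdef
    have hT0 : T ≠ 0 := (ENNReal.ofReal_pos.mpr hR0).ne'
    have hTt : T ≠ ∞ := ENNReal.ofReal_ne_top
    have hvolB : volume (ball (0 : Rn n) R) = T ^ (n : ℝ) * V := by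
      rw [Measure.addHaar_ball _ _ hR0.le, finrank_euclideanSpace_fin,
        ENNReal.ofReal_pow hR0.le, ← ENNReal.rpow_natCast]
    have hroot : volume (ball (0 : Rn n) R) ^ (n : ℝ)⁻¹ = T * a := by
      rw [hvolB, ENNReal.mul_rpow_of_nonneg _ _ (by positivity), ← ENNReal.rpow_mul,
        mul_inv_cancel₀ hn0, ENNReal.rpow_one]
    have hballw : ball (0 : Rn n) ((jw : ℝ) + 1) ⊆ ball 0 R :=
      ball_subset_ball (by rw [hR₀def] at hRR; linarith)
    have hQ : ε / volume (ball (0 : Rn n) R) ^ s ≤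
        essSup w (volume.restrict (ball (0 : Rn n) R)) / volume (ball (0 : Rn n) R) ^ s := by
      refine ENNReal.div_le_div_right ?_ _
      refine essSup_lower (S := E) ?_ (fun x hx => hx.1)
      rw [Measure.restrict_apply hEmeas,
        inter_eq_self_of_subset_left (inter_subset_right.trans hballw)]
      exact hwE
    have hvols : volume (ball (0 : Rn n) R) ^ s = T ^ ((n : ℝ) * s) * V ^ s := by
      rw [hvolB, ENNReal.mul_rpow_of_ne_zero (rpow_ne_zero' hT0 hTt) hV0, ← ENNReal.rpow_mul]
    have hdiv : ε / volume (ball (0 : Rn n) R) ^ s = (ε * (V ^ s)⁻¹) * T ^ (δ - δt) := by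
      rw [hvols, div_eq_mul_inv,
        ENNReal.mul_inv (Or.inl (rpow_ne_zero' hT0 hTt)) (Or.inl (rpow_ne_top' hT0 hTt)),
        show (δ - δt) = -((n : ℝ) * s) from by rw [hsdef]; field_simp; ring, ENNReal.rpow_neg]
      ring
    have hfac : ∀ i, D i * T ^ e i ≤ HmFactor n m δ β p v 0 R i := by
      intro i
      have hri : (r i : ℝ) + 1 ≤ R := by
        have h1 : ((r i : ℝ) + 1) ≤ ∑ j, ((r j : ℝ) + 1) :=
          Finset.single_le_sum (f := fun j : Fin m => (r j : ℝ) + 1)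
            (fun j _ => by positivity) (Finset.mem_univ i)
        rw [hR₀def] at hRR; linarith
      have hb : ∀ x ∈ S i, ((N i : ℝ≥0∞) + 1)⁻¹ * ((a ^ e i ⊓ (a + 1) ^ e i) * T ^ e i) ≤
          (v i x)⁻¹ * (volume (ball (0 : Rn n) R) ^ (n : ℝ)⁻¹ + edist 0 x) ^ e i := by
        intro x hx
        refine mul_le_mul' (ENNReal.inv_le_inv.mpr hx.1) ?_
        set A := volume (ball (0 : Rn n) R) ^ (n : ℝ)⁻¹ + edist (0 : Rn n) x with hA
        have hAlow : a * T ≤ A := by rw [hA, hroot, mul_comm]; exact le_self_add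
        have hA0 : A ≠ 0 := by
          refine fun h0 => (ENNReal.mul_pos ha0 hT0).ne' ?_
          exact le_antisymm (h0 ▸ hAlow) zero_le
        have hAup : A ≤ (a + 1) * T := by
          rw [hA, hroot, add_mul, one_mul, mul_comm a T]
          refine add_le_add_right ?_ _
          rw [edist_dist]
          refine ENNReal.ofReal_le_ofReal ?_
          rw [dist_comm]
          exact le_trans (le_of_lt (mem_ball.mp hx.2)) hri
        rcases le_or_gt 0 (e i) with he | he
        · calc (a ^ e i ⊓ (a + 1) ^ e i) * T ^ e i
              ≤ a ^ e i * T ^ e i := mul_le_mul_left inf_le_left _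
            _ = (a * T) ^ e i := (ENNReal.mul_rpow_of_nonneg _ _ he).symm
            _ ≤ A ^ e i := ENNReal.rpow_le_rpow hAlow he
        · calc (a ^ e i ⊓ (a + 1) ^ e i) * T ^ e i
              ≤ (a + 1) ^ e i * T ^ e i := mul_le_mul_left inf_le_right _
            _ = ((a + 1) * T) ^ e i := (ENNReal.mul_rpow_of_ne_zero (by simp) hT0 _).symm
            _ ≤ A ^ e i := rpow_anti hA0 hAup he.le
      have hlow := LpNormE_lower (conjE_alt (hp i)) (hSmeas i) (hS i) hb
      have heq : D i * T ^ e i =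
          (((N i : ℝ≥0∞) + 1)⁻¹ * ((a ^ e i ⊓ (a + 1) ^ e i) * T ^ e i)) *
            volume (S i) ^ ((conjE (p i)).toReal)⁻¹ := by
        simp only [hDdef]; ring
      rw [heq]
      exact hlow
    calc K * T ^ τ
        = (ε * (V ^ s)⁻¹ * T ^ (δ - δt)) * ((∏ i, D i) * T ^ (∑ i, e i)) := by
          rw [show τ = (δ - δt) + ∑ i, e i from by rw [hτdef, hsum]; ring,
            ENNReal.rpow_add _ _ hT0 hTt, hKdef]
          ring
      _ = (ε / volume (ball (0 : Rn n) R) ^ s) * (∏ i, D i * T ^ e i) := by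
          have hprod : ∏ i, (D i * T ^ e i) = (∏ i, D i) * T ^ (∑ i, e i) := by
            rw [rpow_sum' Finset.univ hT0 hTt, ← Finset.prod_mul_distrib]
          rw [hdiv, hprod]
      _ ≤ (essSup w (volume.restrict (ball (0 : Rn n) R)) /
            volume (ball (0 : Rn n) R) ^ s) * ∏ i, HmFactor n m δ β p v 0 R i :=
          mul_le_mul' hQ (Finset.prod_le_prod' fun i _ => hfac i)
      _ = HmLHS n m δ δt β p w v 0 R := rfl
  -- derive the contradiction
  have hbound : ∀ R : ℝ, R₀ ≤ R → K * (ENNReal.ofReal R) ^ τ ≤ C :=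
    fun R hR => (key R hR).trans (hCle 0 R (lt_of_lt_of_le hR₀pos hR))
  set M : ℝ≥0∞ := C / K with hMdef
  have hMt : M ≠ ∞ := (ENNReal.div_lt_top hC hK0).ne
  set R : ℝ := max R₀ ((M ^ τ⁻¹).toReal + 1) with hRdef
  have hRR₀ : R₀ ≤ R := le_max_left _ _
  have h1 : (ENNReal.ofReal R) ^ τ ≤ M := by
    rw [hMdef, ENNReal.le_div_iff_mul_le (Or.inl hK0) (Or.inl hKt), mul_comm]
    exact hbound R hRR₀
  have h2 : M ^ τ⁻¹ < ENNReal.ofReal R := by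
    have hfin : M ^ τ⁻¹ ≠ ∞ := ENNReal.rpow_ne_top_of_nonneg (by positivity) hMt
    calc M ^ τ⁻¹ = ENNReal.ofReal ((M ^ τ⁻¹).toReal) := (ENNReal.ofReal_toReal hfin).symm
      _ < ENNReal.ofReal R := by
          refine (ENNReal.ofReal_lt_ofReal_iff (lt_of_lt_of_le hR₀pos hRR₀)).mpr ?_
          have := le_max_right R₀ ((M ^ τ⁻¹).toReal + 1)
          linarith
  have h3 : M < (ENNReal.ofReal R) ^ τ := by
    calc M = (M ^ τ⁻¹) ^ τ := by
          rw [← ENNReal.rpow_mul, inv_mul_cancel₀ hτ.ne', ENNReal.rpow_one]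
      _ < _ := ENNReal.rpow_lt_rpow h2 hτ
  exact absurd h1 (not_le.mpr h3)

/-- Theorem 6.5(c): if `δ̃ < β - mn`, the `H_m(p⃗,β,δ̃)` condition holds if and only
if `vᵢ = ∞` almost everywhere for some `i`, or `w = 0` almost everywhere. -/
theorem Hm_trivial_below
    (n m : ℕ) (hn : 1 ≤ n) (hm : 1 ≤ m) (δ δt : ℝ)
    (β : Fin m → ℝ) (hβ : ∀ i, 0 < β i ∧ β i < n)
    (p : Fin m → ℝ≥0∞) (hp : ∀ i, 1 ≤ p i)
    (hδt : δt < (∑ i, β i) - (m : ℝ) * n)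
    (w : Rn n → ℝ≥0∞) (hwmeas : Measurable w) (hwfin : ∀ x, w x ≠ ∞)
    (hwloc : ∀ (c : Rn n) (R : ℝ), 0 < R → ∫⁻ x in ball c R, w x < ∞)
    (v : Fin m → Rn n → ℝ≥0∞) (hvmeas : ∀ i, Measurable (v i))
    (hvpos : ∀ i x, 0 < v i x) :
    MemHm n m δ δt β p w v ↔
      (∃ i, ∀ᵐ x ∂(volume : Measure (Rn n)), v i x = ∞) ∨
        (∀ᵐ x ∂(volume : Measure (Rn n)), w x = 0) := by
  constructor
  · intro hMem
    by_contra hcon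
    push_neg at hcon
    exact Hm_forward_aux n m hn hm δ δt β p hp hδt w hwmeas v hvmeas (fun i => Filter.not_eventually.mpr (hcon.1 i)) (Filter.not_eventually.mpr hcon.2) hMem
  · exact Hm_backward_aux n m δ δt β p hp w v
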